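/- Let T^wf be the Worsey–Farin split of a tetrahedron T ⊂ ℝ³ and r ≥ 0 an integer. For any θ ∈ V_r^3(T^wf) there exist ψ ∈ L_{r+1}^2(T^wf) ∩ V̊_{r+1}^2(T^wf) and γ ∈ 𝒱_r^3(T^wf) such that μ^s θ = div(μ^s ψ) + μ^s γ on T for every integer s ≥ 0. -/

import Mathlib

open MeasureTheory MvPolynomial

noncomputable section

/-- Euclidean 3-space. -/
abbrev E3 : Type := EuclideanSpace ℝ (Fin 3)

/-- Build a point of `E3` from its coordinates. -/
def mk3 (f : Fin 3 → ℝ) : E3 := WithLp.toLp 2 f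

/-- Polynomials in three real variables. -/
abbrev Poly3 : Type := MvPolynomial (Fin 3) ℝ

/-- `degLE r p` : `p` has total degree at most `r`; for `r < 0` this forces `p = 0`,
so that `P_r` is the trivial space for negative `r`. -/
def degLE (r : ℤ) (p : Poly3) : Prop := p = 0 ∨ (p.totalDegree : ℤ) ≤ r

/-- Evaluation of a polynomial at a point of `ℝ³`. -/
def pev (p : Poly3) (x : E3) : ℝ := MvPolynomial.eval (fun i => x i) p

/-- Index set for the 12 tetrahedra of a Worsey–Farin split: a pair `(i, j)` where
`i` is the face index and `j ≠ i`. -/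
abbrev WFIdx : Type := {p : Fin 4 × Fin 4 // p.2 ≠ p.1}

/-- A piecewise polynomial scalar field on the Worsey–Farin split,
recorded as one polynomial per piece. -/
abbrev PwS : Type := WFIdx → Poly3

/-- A piecewise polynomial vector field on the Worsey–Farin split. -/
abbrev PwV : Type := WFIdx → Fin 3 → Poly3

/-- Evaluation of a polynomial vector field at a point. -/
def vev (v : Fin 3 → Poly3) (x : E3) : E3 := mk3 (fun k => pev (v k) x)

/-- Euclidean dot product on `ℝ³`. -/
def dot3 (u w : E3) : ℝ := ∑ k, u k * w k

/-- Cross product on `ℝ³`. -/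
def cross3 (u w : E3) : E3 :=
  mk3 ![u 1 * w 2 - u 2 * w 1, u 2 * w 0 - u 0 * w 2, u 0 * w 1 - u 1 * w 0]

/-- Piecewise gradient. -/
def pwGrad (q : PwS) : PwV := fun σ k => pderiv k (q σ)

/-- Piecewise divergence. -/
def pwDiv (v : PwV) : PwS := fun σ => ∑ k, pderiv k (v σ k)

/-- Curl of a polynomial vector field. -/
def pCurl (v : Fin 3 → Poly3) : Fin 3 → Poly3 :=
  ![pderiv 1 (v 2) - pderiv 2 (v 1),
    pderiv 2 (v 0) - pderiv 0 (v 2),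
    pderiv 0 (v 1) - pderiv 1 (v 0)]

/-- Piecewise curl. -/
def pwCurl (v : PwV) : PwV := fun σ => pCurl (v σ)

/-- The gradient (vector of partial derivatives) of a polynomial, evaluated at a point. -/
def pgradv (p : Poly3) (x : E3) : E3 := mk3 (fun k => pev (pderiv k p) x)

/-- A Worsey–Farin split of a tetrahedron `T ⊂ ℝ³`: the vertices `x 0, …, x 3` of `T`,
an interior split point `z`, and for each face `i` (the face opposite the vertex `x i`)
a split point `m i` in the relative interior of that face. -/
structure WorseyFarin : Type where
  x : Fin 4 → E3
  z : E3
  m : Fin 4 → E3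
  indep : AffineIndependent ℝ x
  hz : z ∈ interior (convexHull ℝ (Set.range x))
  hm : ∀ i, ∃ w : Fin 4 → ℝ, (∀ j, j ≠ i → 0 < w j) ∧ w i = 0 ∧ (∑ j, w j) = 1 ∧
        m i = ∑ j, w j • x j

namespace WorseyFarin

variable (W : WorseyFarin)

/-- The tetrahedron `T` itself. -/
def T : Set E3 := convexHull ℝ (Set.range W.x)

/-- The face of `T` opposite the vertex `x i`. -/
def face (i : Fin 4) : Set E3 := convexHull ℝ (W.x '' {k | k ≠ i})

/-- The sub-tetrahedron of the Worsey–Farin split indexed by `σ = (i, j)`: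
its vertices are `z`, `m i` and the two vertices `x k` with `k ∉ {i, j}`. -/
def tet (σ : WFIdx) : Set E3 :=
  convexHull ℝ ({W.z, W.m σ.1.1} ∪ W.x '' {k | k ≠ σ.1.1 ∧ k ≠ σ.1.2})

/-- The triangle of the Clough–Tocher split of face `i` lying under the piece `(i, j)`:
the triangle with vertices `m i`, `x k`, `x l` for `k, l ∉ {i, j}`. -/
def ftri (i j : Fin 4) : Set E3 :=
  convexHull ℝ ({W.m i} ∪ W.x '' {k | k ≠ i ∧ k ≠ j})

end WorseyFarin

/-- Degree bound for a piecewise scalar field. -/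
def degS (r : ℤ) (q : PwS) : Prop := ∀ σ, degLE r (q σ)

/-- Degree bound for a piecewise vector field. -/
def degV (r : ℤ) (v : PwV) : Prop := ∀ σ k, degLE r (v σ k)

/-- Global continuity of a piecewise scalar field: all traces agree on overlaps;
this is membership in `C⁰(T)`, hence (for piecewise polynomials) in `H¹(T)`. -/
def SCont (W : WorseyFarin) (q : PwS) : Prop :=
  ∀ σ τ : WFIdx, ∀ x ∈ W.tet σ ∩ W.tet τ, pev (q σ) x = pev (q τ) x

/-- Global continuity of a piecewise vector field. -/
def VCont (W : WorseyFarin) (v : PwV) : Prop :=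
  ∀ σ τ : WFIdx, ∀ x ∈ W.tet σ ∩ W.tet τ, vev (v σ) x = vev (v τ) x

/-- Membership in `H(div; T)` for a piecewise polynomial vector field: across every
internal (two-dimensional) interface of the Worsey–Farin split, the jump of `v`
is tangent to the interface (i.e. the normal component of `v` is continuous).
The interfaces are the triangles `{z, m i, x k}` (between two pieces of the same
Alfeld component) and the triangles `{z, x k, x l}` (between two Alfeld components). -/
def HdivMem (W : WorseyFarin) (v : PwV) : Prop :=
  (∀ (i j j' k : Fin 4) (hj : j ≠ i) (hj' : j' ≠ i), j ≠ j' → k ≠ i → k ≠ j → k ≠ j' →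
    ∀ x ∈ W.tet ⟨(i, j), hj⟩ ∩ W.tet ⟨(i, j'), hj'⟩,
      vev (v ⟨(i, j), hj⟩) x - vev (v ⟨(i, j'), hj'⟩) x ∈
        Submodule.span ℝ ({W.m i - W.z, W.x k - W.z} : Set E3)) ∧
  (∀ (i j k l : Fin 4) (hj : j ≠ i) (hi : i ≠ j), k ≠ i → k ≠ j → l ≠ i → l ≠ j → k ≠ l →
    ∀ x ∈ W.tet ⟨(i, j), hj⟩ ∩ W.tet ⟨(j, i), hi⟩,
      vev (v ⟨(i, j), hj⟩) x - vev (v ⟨(j, i), hi⟩) x ∈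
        Submodule.span ℝ ({W.x k - W.z, W.x l - W.z} : Set E3))

/-- Membership in `H(curl; T)` for a piecewise polynomial vector field: across every
internal interface the jump of `v` is orthogonal to the interface (i.e. the
tangential components of `v` are continuous). -/
def HcurlMem (W : WorseyFarin) (v : PwV) : Prop :=
  (∀ (i j j' k : Fin 4) (hj : j ≠ i) (hj' : j' ≠ i), j ≠ j' → k ≠ i → k ≠ j → k ≠ j' →
    ∀ x ∈ W.tet ⟨(i, j), hj⟩ ∩ W.tet ⟨(i, j'), hj'⟩,
      dot3 (vev (v ⟨(i, j), hj⟩) x - vev (v ⟨(i, j'), hj'⟩) x) (W.m i - W.z) = 0 ∧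
      dot3 (vev (v ⟨(i, j), hj⟩) x - vev (v ⟨(i, j'), hj'⟩) x) (W.x k - W.z) = 0) ∧
  (∀ (i j k l : Fin 4) (hj : j ≠ i) (hi : i ≠ j), k ≠ i → k ≠ j → l ≠ i → l ≠ j → k ≠ l →
    ∀ x ∈ W.tet ⟨(i, j), hj⟩ ∩ W.tet ⟨(j, i), hi⟩,
      dot3 (vev (v ⟨(i, j), hj⟩) x - vev (v ⟨(j, i), hi⟩) x) (W.x k - W.z) = 0 ∧
      dot3 (vev (v ⟨(i, j), hj⟩) x - vev (v ⟨(j, i), hi⟩) x) (W.x l - W.z) = 0)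

/-- Zero boundary trace of a scalar field: the trace on each boundary face vanishes. -/
def zeroTraceS (W : WorseyFarin) (q : PwS) : Prop :=
  ∀ σ : WFIdx, ∀ x ∈ W.tet σ ∩ W.face σ.1.1, pev (q σ) x = 0

/-- Zero boundary trace of a vector field. -/
def zeroTraceV (W : WorseyFarin) (v : PwV) : Prop :=
  ∀ σ : WFIdx, ∀ x ∈ W.tet σ ∩ W.face σ.1.1, vev (v σ) x = 0

/-- `v × n = 0` on `∂T`: the tangential components of `v` vanish on each boundary face. -/
def zeroTan (W : WorseyFarin) (v : PwV) : Prop :=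
  ∀ σ : WFIdx, ∀ x ∈ W.tet σ ∩ W.face σ.1.1, ∀ k l : Fin 4, k ≠ σ.1.1 → l ≠ σ.1.1 →
    dot3 (vev (v σ) x) (W.x k - W.x l) = 0

/-- `v ⬝ n = 0` on `∂T`: on each boundary face, `v` is tangent to the face. -/
def zeroNor (W : WorseyFarin) (v : PwV) : Prop :=
  ∀ σ : WFIdx, ∀ x ∈ W.tet σ ∩ W.face σ.1.1,
    vev (v σ) x ∈ Submodule.span ℝ
      ((fun p : Fin 4 × Fin 4 => W.x p.1 - W.x p.2) '' {p | p.1 ≠ σ.1.1 ∧ p.2 ≠ σ.1.1})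

/-- Mean-zero condition `∫_T q dx = 0`. -/
def meanZero (W : WorseyFarin) (q : PwS) : Prop :=
  (∑ σ : WFIdx, ∫ x in W.tet σ, pev (q σ) x) = 0

/-- Continuity of a (possibly discontinuous) scalar field on each face `F` of `T`. -/
def faceCont (W : WorseyFarin) (q : PwS) : Prop :=
  ∀ σ τ : WFIdx, σ.1.1 = τ.1.1 → ∀ x ∈ W.tet σ ∩ W.tet τ ∩ W.face σ.1.1,
    pev (q σ) x = pev (q τ) x

/-- Continuity of `v × n` on each face `F` of `T`: the tangential components of the
traces on `F` agree. -/
def faceTanCont (W : WorseyFarin) (v : PwV) : Prop :=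
  ∀ σ τ : WFIdx, σ.1.1 = τ.1.1 → ∀ x ∈ W.tet σ ∩ W.tet τ ∩ W.face σ.1.1,
    ∀ k l : Fin 4, k ≠ σ.1.1 → l ≠ σ.1.1 →
      dot3 (vev (v σ) x - vev (v τ) x) (W.x k - W.x l) = 0

/-! ### The local finite element spaces on the Worsey–Farin split -/

/-- `V_r^0(T^wf) = P_r(T^wf) ∩ H¹(T)`. -/
def memV0 (W : WorseyFarin) (r : ℤ) (q : PwS) : Prop := degS r q ∧ SCont W q

/-- `L_r^0(T^wf) = V_r^0(T^wf)`, the scalar Lagrange space. -/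
def memL0 (W : WorseyFarin) (r : ℤ) (q : PwS) : Prop := memV0 W r q

/-- `V_r^1(T^wf) = [P_r(T^wf)]³ ∩ H(curl; T)`. -/
def memV1 (W : WorseyFarin) (r : ℤ) (v : PwV) : Prop := degV r v ∧ HcurlMem W v

/-- `V_r^2(T^wf) = [P_r(T^wf)]³ ∩ H(div; T)`. -/
def memV2 (W : WorseyFarin) (r : ℤ) (v : PwV) : Prop := degV r v ∧ HdivMem W v

/-- `V_r^3(T^wf) = P_r(T^wf)`. -/
def memV3 (W : WorseyFarin) (r : ℤ) (q : PwS) : Prop := degS r q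

/-- `L_r^1(T^wf) = L_r^2(T^wf) = [L_r^0(T^wf)]³`, the vector Lagrange space. -/
def memL1 (W : WorseyFarin) (r : ℤ) (v : PwV) : Prop := degV r v ∧ VCont W v

/-- `L_r^3(T^wf) = V_r^0(T^wf)`. -/
def memL3 (W : WorseyFarin) (r : ℤ) (q : PwS) : Prop := memV0 W r q

/-- `S_r^0(T^wf) = {v ∈ L_r^0 : grad v ∈ L_{r-1}^1}`. -/
def memS0 (W : WorseyFarin) (r : ℤ) (q : PwS) : Prop :=
  memL0 W r q ∧ memL1 W (r - 1) (pwGrad q)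

/-- `S_r^1(T^wf) = {v ∈ L_r^1 : curl v ∈ L_{r-1}^2}`. -/
def memS1 (W : WorseyFarin) (r : ℤ) (v : PwV) : Prop :=
  memL1 W r v ∧ memL1 W (r - 1) (pwCurl v)

/-- `S_r^2(T^wf) = {v ∈ L_r^2 : div v ∈ L_{r-1}^3}`. -/
def memS2 (W : WorseyFarin) (r : ℤ) (v : PwV) : Prop :=
  memL1 W r v ∧ memL3 W (r - 1) (pwDiv v)

/-- `V̊_r^0(T^wf) = V_r^0 ∩ H̊¹(T)`. -/
def memV0o (W : WorseyFarin) (r : ℤ) (q : PwS) : Prop := memV0 W r q ∧ zeroTraceS W q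

/-- `V̊_r^1(T^wf) = {v ∈ V_r^1 : v × n = 0 on ∂T}`. -/
def memV1o (W : WorseyFarin) (r : ℤ) (v : PwV) : Prop := memV1 W r v ∧ zeroTan W v

/-- `V̊_r^2(T^wf) = {v ∈ V_r^2 : v ⬝ n = 0 on ∂T}`. -/
def memV2o (W : WorseyFarin) (r : ℤ) (v : PwV) : Prop := memV2 W r v ∧ zeroNor W v

/-- `V̊_r^3(T^wf) = V_r^3 ∩ L²₀(T)`. -/
def memV3o (W : WorseyFarin) (r : ℤ) (q : PwS) : Prop := memV3 W r q ∧ meanZero W q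

/-- `L̊_r^0(T^wf)`. -/
def memL0o (W : WorseyFarin) (r : ℤ) (q : PwS) : Prop := memL0 W r q ∧ zeroTraceS W q

/-- `L̊_r^1(T^wf) = L̊_r^2(T^wf) = [L̊_r^0(T^wf)]³`. -/
def memL1o (W : WorseyFarin) (r : ℤ) (v : PwV) : Prop := memL1 W r v ∧ zeroTraceV W v

/-- `L̊_r^3(T^wf) = L²₀(T) ∩ L̊_r^0(T^wf)`. -/
def memL3o (W : WorseyFarin) (r : ℤ) (q : PwS) : Prop :=
  memL0 W r q ∧ zeroTraceS W q ∧ meanZero W q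

/-- `S̊_r^0(T^wf) = {v ∈ L̊_r^0 : grad v ∈ L̊_{r-1}^1}`. -/
def memS0o (W : WorseyFarin) (r : ℤ) (q : PwS) : Prop :=
  memL0o W r q ∧ memL1o W (r - 1) (pwGrad q)

/-- `S̊_r^1(T^wf) = {v ∈ L̊_r^1 : curl v ∈ L̊_{r-1}^2}`. -/
def memS1o (W : WorseyFarin) (r : ℤ) (v : PwV) : Prop :=
  memL1o W r v ∧ memL1o W (r - 1) (pwCurl v)

/-- `S̊_r^2(T^wf) = {v ∈ L̊_r^2 : div v ∈ L̊_{r-1}^3}`. -/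
def memS2o (W : WorseyFarin) (r : ℤ) (v : PwV) : Prop :=
  memL1o W r v ∧ memL3o W (r - 1) (pwDiv v)

/-- `𝒱_r^2(T^wf) = {v ∈ V_r^2 : v × n continuous on each face F of T}`. -/
def memCalV2 (W : WorseyFarin) (r : ℤ) (v : PwV) : Prop := memV2 W r v ∧ faceTanCont W v

/-- `𝒱̊_r^2(T^wf) = {v ∈ 𝒱_r^2 : v ⬝ n = 0 on each face F of T}`. -/
def memCalV2o (W : WorseyFarin) (r : ℤ) (v : PwV) : Prop := memCalV2 W r v ∧ zeroNor W v

/-- `𝒱_r^3(T^wf) = {q ∈ V_r^3 : q continuous on each face F of T}`. -/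
def memCalV3 (W : WorseyFarin) (r : ℤ) (q : PwS) : Prop := memV3 W r q ∧ faceCont W q

/-- `𝒱̊_r^3(T^wf) = 𝒱_r^3 ∩ L²₀(T)`. -/
def memCalV3o (W : WorseyFarin) (r : ℤ) (q : PwS) : Prop := memCalV3 W r q ∧ meanZero W q

/-- `IsHat W μ` : `μ` is (the collection of polynomial pieces of) the piecewise linear
"hat" function of the Alfeld split: affine on each piece, `μ(z) = 1`, and `μ = 0` on `∂T`
(it vanishes at the vertices of `T` and at the face split points). -/
def IsHat (W : WorseyFarin) (μ : PwS) : Prop :=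
  ∀ σ : WFIdx, degLE 1 (μ σ) ∧ pev (μ σ) W.z = 1 ∧ pev (μ σ) (W.m σ.1.1) = 0 ∧
    ∀ k : Fin 4, k ≠ σ.1.1 → k ≠ σ.1.2 → pev (μ σ) (W.x k) = 0

/-!
On the Alfeld component of the face `i`, let `c_t = λ_t(m_i)` be the barycentric coordinates
of `m_i` (so `c_i = 0`, `∑ c_t = 1`), `θ̄_i = ∑ c_t θ_(i,t)` and
`V_i = ∑_t c_t (θ_(i,t) - θ̄_i) (x_t - z)`, a single polynomial field on the whole component.
For an affine `ℓ`, `∇ℓ · V_i = ∑_t c_t (θ_(i,t) - θ̄_i) (ℓ(x_t) - ℓ(z))`. On the piece `(i, j)`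
the continuous piecewise linear hat function `φ` of `m_i` is `1` at `m_i` and `0` at `z` and at
the two vertices `x_k`, so its affine extension is `1 / c_j` at `x_j`, and
`∇φ · V_i = θ_(i,j) - θ̄_i`. In the same way `μ` is `1` at `z` and `0` at every `x_t`, `t ≠ i`,
so `∇μ · V_i = -∑_t c_t (θ_(i,t) - θ̄_i) = 0`.

Take `ψ = φ V_i`. Then `div ψ = θ - θ̄_i + φ div V_i`, so `γ = θ - div ψ = θ̄_i - φ div V_i` is
continuous on each component, and `∇μ · ψ = 0` gives `div (μ^s ψ) = μ^s div ψ`. `ψ` is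
continuous because `φ` is and vanishes on the boundary of its component, and it is tangent to
the face `i` because the weights of `V_i` sum to zero and vanish at `t = i`.
-/

namespace MvPolynomial

variable {σ R : Type*} [CommSemiring R]

theorem totalDegree_pderiv_le (p : MvPolynomial σ R) (i : σ) :
    (pderiv i p).totalDegree ≤ p.totalDegree - 1 := by
  conv_lhs => rw [← sum_homogeneousComponent p]
  rw [map_sum]
  refine totalDegree_finsetSum_le fun n hn => ?_
  refine (homogeneousComponent_isHomogeneous n p).pderiv.totalDegree_le.trans ?_
  have := Finset.mem_range.mp hn
  omega

theorem pderiv_eq_C_coeff_zero_of_totalDegree_le_one {p : MvPolynomial σ R}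
    (hp : p.totalDegree ≤ 1) (i : σ) : pderiv i p = C (coeff 0 (pderiv i p)) :=
  totalDegree_eq_zero_iff_eq_C.mp (by have := totalDegree_pderiv_le p i; omega)

theorem eq_C_add_sum_X_mul_pderiv [Fintype σ] {p : MvPolynomial σ R}
    (hp : p.totalDegree ≤ 1) : p = C (coeff 0 p) + ∑ i, X i * pderiv i p := by
  have hsplit : p = homogeneousComponent 0 p + homogeneousComponent 1 p := by
    have h2 : ∑ n ∈ Finset.range 2, homogeneousComponent n p = p := by
      rw [← Finset.sum_subset (Finset.range_subset_range.mpr (Nat.succ_le_succ hp))]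
      · exact sum_homogeneousComponent p
      · intro n _ hn
        exact homogeneousComponent_eq_zero n p (by simp at hn; omega)
    simpa [Finset.sum_range_succ] using h2.symm
  have hEuler := (homogeneousComponent_isHomogeneous 1 p).sum_X_mul_pderiv
  rw [one_smul] at hEuler
  conv_lhs => rw [hsplit, ← hEuler]
  rw [homogeneousComponent_zero]
  congr 1
  refine Finset.sum_congr rfl fun i _ => ?_
  conv_rhs => rw [hsplit]
  simp [homogeneousComponent_zero]

theorem totalDegree_C_mul_le (a : R) (p : MvPolynomial σ R) :
    (C a * p).totalDegree ≤ p.totalDegree := by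
  rw [C_mul']
  exact totalDegree_smul_le a p

theorem sum_pderiv_pow_mul [Fintype σ] {m : MvPolynomial σ R} {v : σ → MvPolynomial σ R}
    (h : ∑ k, pderiv k m * v k = 0) (s : ℕ) :
    ∑ k, pderiv k (m ^ s * v k) = m ^ s * ∑ k, pderiv k (v k) := by
  simp only [pderiv_mul, pderiv_pow, Finset.sum_add_distrib, ← Finset.mul_sum, mul_assoc, h,
    mul_zero, zero_add]

end MvPolynomial

lemma degLE_natCast_iff {n : ℕ} {p : Poly3} : degLE n p ↔ p.totalDegree ≤ n := by
  refine ⟨?_, fun h => Or.inr (by exact_mod_cast h)⟩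
  rintro (rfl | h)
  · simp
  · exact_mod_cast h

lemma hdivMem_of_vCont {W : WorseyFarin} {v : PwV} (h : VCont W v) : HdivMem W v :=
  ⟨fun _ _ _ _ _ _ _ _ _ _ x hx => by rw [h _ _ x hx, sub_self]; exact zero_mem _,
    fun _ _ _ _ _ _ _ _ _ _ _ x hx => by rw [h _ _ x hx, sub_self]; exact zero_mem _⟩

section Poly3

variable {p : Poly3}

lemma pev_eq_of_totalDegree_le_one (hp : p.totalDegree ≤ 1) (x : E3) :
    pev p x = coeff 0 p + ∑ k, coeff 0 (pderiv k p) * x k := by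
  conv_lhs => rw [pev, eq_C_add_sum_X_mul_pderiv hp]
  simp only [map_add, eval_C, map_sum, map_mul, eval_X]
  congr 1
  refine Finset.sum_congr rfl fun k _ => ?_
  rw [pderiv_eq_C_coeff_zero_of_totalDegree_le_one hp k]
  simp [mul_comm]

lemma pev_sum_smul_of_totalDegree_le_one (hp : p.totalDegree ≤ 1) {ι : Type*} (s : Finset ι)
    (w : ι → ℝ) (y : ι → E3) (hw : ∑ t ∈ s, w t = 1) :
    pev p (∑ t ∈ s, w t • y t) = ∑ t ∈ s, w t * pev p (y t) := by
  simp only [pev_eq_of_totalDegree_le_one hp, mul_add, Finset.sum_add_distrib, ← Finset.sum_mul,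
    hw, one_mul, WithLp.ofLp_sum, WithLp.ofLp_smul, Finset.sum_apply, Pi.smul_apply, smul_eq_mul]
  simp only [Finset.mul_sum]
  rw [Finset.sum_comm]
  exact congrArg _ (Finset.sum_congr rfl fun _ _ => Finset.sum_congr rfl fun _ _ => by ring)

def spokeField {ι : Type*} [Fintype ι] (z : E3) (y : ι → E3) (a : ι → Poly3) : Fin 3 → Poly3 :=
  fun k => ∑ t, a t * C (y t k - z k)

lemma vev_spokeField {ι : Type*} [Fintype ι] (z : E3) (y : ι → E3) (a : ι → Poly3) (x : E3) :
    vev (spokeField z y a) x = ∑ t, pev (a t) x • (y t - z) := by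
  ext k
  simp [vev, mk3, spokeField, pev]

lemma sum_pderiv_mul_spokeField (hp : p.totalDegree ≤ 1) {ι : Type*} [Fintype ι] (z : E3)
    (y : ι → E3) (a : ι → Poly3) :
    ∑ k, pderiv k p * spokeField z y a k = ∑ t, a t * C (pev p (y t) - pev p z) := by
  simp only [spokeField, Finset.mul_sum]
  rw [Finset.sum_comm]
  refine Finset.sum_congr rfl fun t _ => ?_
  rw [pev_eq_of_totalDegree_le_one hp, pev_eq_of_totalDegree_le_one hp, add_sub_add_left_eq_sub,
    ← Finset.sum_sub_distrib, map_sum, Finset.mul_sum]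
  refine Finset.sum_congr rfl fun k _ => ?_
  rw [pderiv_eq_C_coeff_zero_of_totalDegree_le_one hp k]
  simp only [coeff_zero_C, map_sub, map_mul]
  ring

def affinePoly (f : E3 →ᵃ[ℝ] ℝ) : Poly3 :=
  C (f 0) + ∑ k, C (f.linear (EuclideanSpace.single k 1)) * X k

lemma pev_affinePoly (f : E3 →ᵃ[ℝ] ℝ) (x : E3) : pev (affinePoly f) x = f x := by
  have hx : x = ∑ k, x k • EuclideanSpace.single k (1 : ℝ) := by
    ext k; simp [Pi.single_apply]
  conv_rhs => rw [← vsub_vadd x 0, f.map_vadd, hx]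
  simp [pev, affinePoly, mul_comm, add_comm]

lemma totalDegree_affinePoly_le (f : E3 →ᵃ[ℝ] ℝ) : (affinePoly f).totalDegree ≤ 1 := by
  refine (totalDegree_add _ _).trans (max_le (by simp) (totalDegree_finsetSum_le fun k _ => ?_))
  refine (totalDegree_mul _ _).trans ?_
  simp

end Poly3

namespace WorseyFarin

variable (W : WorseyFarin)

def affineBasis : AffineBasis (Fin 4) ℝ E3 :=
  ⟨W.x, W.indep, W.indep.affineSpan_eq_top_iff_card_eq_finrank_add_one.mpr (by simp)⟩

variable {W}

@[simp]
lemma coord_x_self (t : Fin 4) : W.affineBasis.coord t (W.x t) = 1 :=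
  W.affineBasis.coord_apply_eq t

lemma coord_x_of_ne {t u : Fin 4} (h : u ≠ t) : W.affineBasis.coord t (W.x u) = 0 :=
  W.affineBasis.coord_apply_ne h.symm

lemma coord_z_pos (t : Fin 4) : 0 < W.affineBasis.coord t W.z := by
  have hz := W.hz
  rw [show Set.range W.x = Set.range W.affineBasis from rfl,
    W.affineBasis.interior_convexHull] at hz
  exact hz t

lemma coord_m_eq {i : Fin 4} {w : Fin 4 → ℝ} (hw : ∑ j, w j = 1) (hm : W.m i = ∑ j, w j • W.x j)
    (t : Fin 4) : W.affineBasis.coord t (W.m i) = w t := by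
  rw [hm, ← Finset.univ.affineCombination_eq_linear_combination _ _ hw]
  exact W.affineBasis.coord_apply_combination_of_mem (Finset.mem_univ t) hw

@[simp]
lemma coord_m_self (i : Fin 4) : W.affineBasis.coord i (W.m i) = 0 := by
  obtain ⟨w, -, hwi, hw, hm⟩ := W.hm i
  rw [coord_m_eq hw hm, hwi]

lemma coord_m_pos {i j : Fin 4} (h : j ≠ i) : 0 < W.affineBasis.coord j (W.m i) := by
  obtain ⟨w, hpos, -, hw, hm⟩ := W.hm i
  rw [coord_m_eq hw hm]
  exact hpos j h

lemma m_eq_sum_coord_smul (i : Fin 4) : W.m i = ∑ t, W.affineBasis.coord t (W.m i) • W.x t :=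
  (W.affineBasis.linear_combination_coord_eq_self (W.m i)).symm

lemma nonneg_of_mem_tet (f : E3 →ᵃ[ℝ] ℝ) {σ : WFIdx} (hz : 0 ≤ f W.z) (hm : 0 ≤ f (W.m σ.1.1))
    (hx : ∀ k, k ≠ σ.1.1 → k ≠ σ.1.2 → 0 ≤ f (W.x k)) {y : E3} (hy : y ∈ W.tet σ) : 0 ≤ f y := by
  refine convexHull_min ?_ ((convex_Ici 0).affine_preimage f) hy
  rintro _ ((rfl | rfl) | ⟨k, ⟨hki, hkj⟩, rfl⟩)
  exacts [hz, hm, hx k hki hkj]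

variable (W)

/-- Restricted to the piece `(i, j)`, the barycentric coordinate of its vertex `m i`. -/
def hatAff (i j : Fin 4) : E3 →ᵃ[ℝ] ℝ :=
  (W.affineBasis.coord j (W.m i))⁻¹ • (W.affineBasis.coord j -
    (W.affineBasis.coord j W.z / W.affineBasis.coord i W.z) • W.affineBasis.coord i)

/-- Separates the Alfeld components of the faces `i` and `i'`: it vanishes on their common face
`conv {z, x k, x l}` and is nonnegative on the component of `i`. -/
def sepAff (i i' : Fin 4) : E3 →ᵃ[ℝ] ℝ :=
  W.affineBasis.coord i W.z • W.affineBasis.coord i' -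
    W.affineBasis.coord i' W.z • W.affineBasis.coord i

variable {W} {i j k : Fin 4}

@[simp]
lemma hatAff_z : W.hatAff i j W.z = 0 := by
  simp [hatAff, div_mul_cancel₀ _ (coord_z_pos i).ne']

lemma hatAff_m (h : j ≠ i) : W.hatAff i j (W.m i) = 1 := by
  simp [hatAff, inv_mul_cancel₀ (coord_m_pos h).ne']

lemma hatAff_x_self (h : j ≠ i) : W.hatAff i j (W.x j) = (W.affineBasis.coord j (W.m i))⁻¹ := by
  simp [hatAff, coord_x_of_ne h]

lemma hatAff_x_of_ne (hi : k ≠ i) (hj : k ≠ j) : W.hatAff i j (W.x k) = 0 := by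
  simp [hatAff, coord_x_of_ne hi, coord_x_of_ne hj]

lemma hatAff_x_nonneg (hi : k ≠ i) : 0 ≤ W.hatAff i j (W.x k) := by
  rcases eq_or_ne k j with rfl | hj
  · rw [hatAff_x_self hi]
    exact (inv_pos.mpr (coord_m_pos hi)).le
  · rw [hatAff_x_of_ne hi hj]

lemma hatAff_le_of_mem_tet {σ τ : WFIdx} (h : σ.1.1 = τ.1.1) {y : E3} (hy : y ∈ W.tet σ) :
    W.hatAff σ.1.1 σ.1.2 y ≤ W.hatAff τ.1.1 τ.1.2 y := by
  obtain ⟨⟨i, j⟩, hj⟩ := σ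
  obtain ⟨⟨i', j'⟩, hj'⟩ := τ
  obtain rfl : i = i' := h
  have := nonneg_of_mem_tet (W.hatAff i j' - W.hatAff i j) (by simp)
    (by simp [hatAff_m hj, hatAff_m hj']) (fun k hki hkj => by
      simpa [hatAff_x_of_ne hki hkj] using hatAff_x_nonneg (j := j') hki) hy
  simpa using this

lemma hatAff_eq_of_mem_tet_inter {σ τ : WFIdx} (h : σ.1.1 = τ.1.1) {y : E3}
    (hσ : y ∈ W.tet σ) (hτ : y ∈ W.tet τ) :
    W.hatAff σ.1.1 σ.1.2 y = W.hatAff τ.1.1 τ.1.2 y :=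
  le_antisymm (hatAff_le_of_mem_tet h hσ) (hatAff_le_of_mem_tet h.symm hτ)

lemma sepAff_swap (i i' : Fin 4) (y : E3) : W.sepAff i' i y = -W.sepAff i i' y := by
  simp only [sepAff, AffineMap.coe_sub, AffineMap.coe_smul, Pi.sub_apply, Pi.smul_apply,
    smul_eq_mul]
  ring

lemma sepAff_m_pos {i i' : Fin 4} (h : i' ≠ i) : 0 < W.sepAff i i' (W.m i) := by
  simpa [sepAff] using mul_pos (coord_z_pos i) (coord_m_pos h)

lemma sepAff_x_nonneg {i i' : Fin 4} (h : k ≠ i) : 0 ≤ W.sepAff i i' (W.x k) := by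
  rcases eq_or_ne k i' with rfl | hk
  · simpa [sepAff, coord_x_of_ne h] using (coord_z_pos i).le
  · simp [sepAff, coord_x_of_ne h, coord_x_of_ne hk]

lemma sepAff_nonneg_of_mem_tet {σ : WFIdx} {i' : Fin 4} (h : i' ≠ σ.1.1) {y : E3}
    (hy : y ∈ W.tet σ) : 0 ≤ W.sepAff σ.1.1 i' y :=
  nonneg_of_mem_tet _ (by simp [sepAff, mul_comm]) (sepAff_m_pos h).le
    (fun _ hki _ => sepAff_x_nonneg hki) hy

lemma hatAff_eq_zero_of_mem_tet_inter {σ τ : WFIdx} (h : σ.1.1 ≠ τ.1.1) {y : E3}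
    (hσ : y ∈ W.tet σ) (hτ : y ∈ W.tet τ) : W.hatAff σ.1.1 σ.1.2 y = 0 := by
  -- on `tet σ`, `0 ≤ hatAff ≤ sepAff / sepAff (m i)`, and `sepAff` vanishes on the intersection
  obtain ⟨⟨i, j⟩, hj⟩ := σ
  obtain ⟨⟨i', j'⟩, hj'⟩ := τ
  change i ≠ i' at h
  have hsep : W.sepAff i i' y = 0 := by
    have := sepAff_nonneg_of_mem_tet h hτ
    rw [sepAff_swap] at this
    linarith [sepAff_nonneg_of_mem_tet h.symm hσ]
  have hK := sepAff_m_pos (W := W) h.symm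
  have hle := nonneg_of_mem_tet ((W.sepAff i i' (W.m i))⁻¹ • W.sepAff i i' - W.hatAff i j)
    (by simp [sepAff, mul_comm]) (by simp [inv_mul_cancel₀ hK.ne', hatAff_m hj])
    (fun k hki hkj => by
      simpa [hatAff_x_of_ne hki hkj] using
        mul_nonneg (inv_nonneg.mpr hK.le) (sepAff_x_nonneg (i' := i') hki)) hσ
  have hge := nonneg_of_mem_tet (W.hatAff i j) (by simp) (by simp [hatAff_m hj])
    (fun k hki _ => hatAff_x_nonneg hki) hσ
  simp [hsep] at hle
  linarith

theorem _root_.IsHat.pev_x_eq_zero {W : WorseyFarin} {μ : PwS} (hμ : IsHat W μ) (σ : WFIdx)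
    {t : Fin 4} (ht : t ≠ σ.1.1) : pev (μ σ) (W.x t) = 0 := by
  obtain ⟨hdeg, -, hm, hx⟩ := hμ σ
  have hdeg : (μ σ).totalDegree ≤ 1 := degLE_natCast_iff.mp (by exact_mod_cast hdeg)
  rcases eq_or_ne t σ.1.2 with rfl | htj
  · rw [m_eq_sum_coord_smul, pev_sum_smul_of_totalDegree_le_one hdeg _ _ _
      (W.affineBasis.sum_coord_apply_eq_one _), Finset.sum_eq_single σ.1.2] at hm
    · exact (mul_eq_zero.mp hm).resolve_left (coord_m_pos σ.2).ne'
    · intro k _ hk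
      rcases eq_or_ne k σ.1.1 with rfl | hki
      · simp
      · simp [hx k hki hk]
    · simp
  · exact hx t ht htj

-- The junk value at `t = i` is always multiplied by `λ_i(m_i) = 0`.
def alfeldPiece (θ : PwS) (i t : Fin 4) : Poly3 := if h : t = i then 0 else θ ⟨(i, t), h⟩

variable (W) (θ : PwS)

def alfeldMean (i : Fin 4) : Poly3 :=
  ∑ t, C (W.affineBasis.coord t (W.m i)) * alfeldPiece θ i t

def alfeldWeight (i t : Fin 4) : Poly3 :=
  C (W.affineBasis.coord t (W.m i)) * (alfeldPiece θ i t - W.alfeldMean θ i)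

def alfeldField (i : Fin 4) : Fin 3 → Poly3 := spokeField W.z W.x (W.alfeldWeight θ i)

def hatPoly (i j : Fin 4) : Poly3 := affinePoly (W.hatAff i j)

def correctorField : PwV := fun σ k => W.hatPoly σ.1.1 σ.1.2 * W.alfeldField θ σ.1.1 k

def correctorRemainder : PwS := fun σ => θ σ - pwDiv (W.correctorField θ) σ

variable {W θ}

@[simp]
lemma alfeldWeight_self : W.alfeldWeight θ i i = 0 := by
  simp [alfeldWeight]

lemma sum_alfeldWeight : ∑ t, W.alfeldWeight θ i t = 0 := by
  simp only [alfeldWeight, mul_sub, Finset.sum_sub_distrib, ← Finset.sum_mul, ← map_sum,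
    W.affineBasis.sum_coord_apply_eq_one, map_one, one_mul, alfeldMean, sub_self]

lemma sum_pderiv_mul_alfeldField_of_eq {p : Poly3} (hp : p.totalDegree ≤ 1) {a : ℝ}
    (hx : ∀ t, t ≠ i → pev p (W.x t) = a) :
    ∑ k, pderiv k p * W.alfeldField θ i k = 0 := by
  rw [alfeldField, sum_pderiv_mul_spokeField hp]
  calc ∑ t, W.alfeldWeight θ i t * C (pev p (W.x t) - pev p W.z)
      = ∑ t, W.alfeldWeight θ i t * C (a - pev p W.z) := by
        refine Finset.sum_congr rfl fun t _ => ?_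
        rcases eq_or_ne t i with rfl | ht
        · simp
        · rw [hx t ht]
    _ = 0 := by rw [← Finset.sum_mul, sum_alfeldWeight, zero_mul]

lemma sum_pderiv_hatPoly_mul_alfeldField (h : j ≠ i) :
    ∑ k, pderiv k (W.hatPoly i j) * W.alfeldField θ i k =
      alfeldPiece θ i j - W.alfeldMean θ i := by
  rw [alfeldField, hatPoly, sum_pderiv_mul_spokeField (totalDegree_affinePoly_le _),
    Finset.sum_eq_single j]
  · rw [pev_affinePoly, pev_affinePoly, hatAff_x_self h, hatAff_z, sub_zero, alfeldWeight,
      mul_comm, ← mul_assoc, ← map_mul, inv_mul_cancel₀ (coord_m_pos h).ne', map_one, one_mul]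
  · intro t _ htj
    rcases eq_or_ne t i with rfl | hti
    · simp
    · simp [pev_affinePoly, hatAff_x_of_ne hti htj]
  · simp

lemma pwDiv_correctorField (σ : WFIdx) :
    pwDiv (W.correctorField θ) σ = θ σ - W.alfeldMean θ σ.1.1 +
      W.hatPoly σ.1.1 σ.1.2 * ∑ k, pderiv k (W.alfeldField θ σ.1.1 k) := by
  have hθ : alfeldPiece θ σ.1.1 σ.1.2 = θ σ := dif_neg σ.2
  simp only [pwDiv, correctorField, pderiv_mul, Finset.sum_add_distrib, ← Finset.mul_sum,
    sum_pderiv_hatPoly_mul_alfeldField σ.2, hθ]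

lemma pev_correctorRemainder (σ : WFIdx) (y : E3) :
    pev (W.correctorRemainder θ σ) y = pev (W.alfeldMean θ σ.1.1) y -
      W.hatAff σ.1.1 σ.1.2 y * pev (∑ k, pderiv k (W.alfeldField θ σ.1.1 k)) y := by
  rw [correctorRemainder, pwDiv_correctorField, ← pev_affinePoly, ← hatPoly]
  simp only [pev, map_sub, map_add, map_mul]
  ring

lemma vev_correctorField (σ : WFIdx) (y : E3) :
    vev (W.correctorField θ σ) y =
      W.hatAff σ.1.1 σ.1.2 y • ∑ t, pev (W.alfeldWeight θ σ.1.1 t) y • (W.x t - W.z) := by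
  rw [← vev_spokeField, ← pev_affinePoly, ← hatPoly]
  ext k
  simp [vev, mk3, correctorField, alfeldField, pev]

theorem _root_.IsHat.sum_pderiv_mul_correctorField {μ : PwS} (hμ : IsHat W μ) (σ : WFIdx) :
    ∑ k, pderiv k (μ σ) * W.correctorField θ σ k = 0 := by
  have hdeg : (μ σ).totalDegree ≤ 1 := degLE_natCast_iff.mp (by exact_mod_cast (hμ σ).1)
  simp only [correctorField, mul_left_comm _ (W.hatPoly _ _), ← Finset.mul_sum]
  rw [sum_pderiv_mul_alfeldField_of_eq hdeg (fun t ht => hμ.pev_x_eq_zero σ ht), mul_zero]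

variable (W)

lemma vCont_correctorField : VCont W (W.correctorField θ) := by
  rintro σ τ y ⟨hσ, hτ⟩
  rw [vev_correctorField, vev_correctorField]
  by_cases h : σ.1.1 = τ.1.1
  · rw [hatAff_eq_of_mem_tet_inter h hσ hτ, h]
  · rw [hatAff_eq_zero_of_mem_tet_inter h hσ hτ,
      hatAff_eq_zero_of_mem_tet_inter (Ne.symm h) hτ hσ, zero_smul, zero_smul]

lemma zeroNor_correctorField : zeroNor W (W.correctorField θ) := by
  intro σ y _
  rw [vev_correctorField]
  refine Submodule.smul_mem _ _ ?_
  have hsum : ∑ t, pev (W.alfeldWeight θ σ.1.1 t) y = 0 := by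
    simpa [pev] using congrArg (pev · y) (sum_alfeldWeight (W := W) (θ := θ) (i := σ.1.1))
  have := Finset.univ.weightedVSubOfPoint_eq_of_sum_eq_zero _ W.x hsum W.z (W.x σ.1.2)
  simp only [Finset.weightedVSubOfPoint_apply, vsub_eq_sub] at this
  rw [this]
  refine Submodule.sum_mem _ fun t _ => ?_
  rcases eq_or_ne t σ.1.1 with rfl | ht
  · simp [pev]
  · exact Submodule.smul_mem _ _ (Submodule.subset_span ⟨(t, σ.1.2), ⟨ht, σ.2⟩, rfl⟩)

lemma faceCont_correctorRemainder : faceCont W (W.correctorRemainder θ) := by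
  rintro σ τ h y ⟨⟨hσ, hτ⟩, -⟩
  rw [pev_correctorRemainder, pev_correctorRemainder, hatAff_eq_of_mem_tet_inter h hσ hτ, h]

section Degree

variable {r : ℕ} (hθ : ∀ σ, (θ σ).totalDegree ≤ r)
include hθ

lemma totalDegree_alfeldPiece_le (i t : Fin 4) : (alfeldPiece θ i t).totalDegree ≤ r := by
  unfold alfeldPiece
  split_ifs
  exacts [by simp, hθ _]

lemma totalDegree_alfeldWeight_le (i t : Fin 4) : (W.alfeldWeight θ i t).totalDegree ≤ r := by
  refine (totalDegree_C_mul_le _ _).trans ((totalDegree_sub _ _).trans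
    (max_le (totalDegree_alfeldPiece_le hθ i t) (totalDegree_finsetSum_le fun u _ => ?_)))
  exact (totalDegree_C_mul_le _ _).trans (totalDegree_alfeldPiece_le hθ i u)

lemma totalDegree_correctorField_le (σ : WFIdx) (k : Fin 3) :
    (W.correctorField θ σ k).totalDegree ≤ r + 1 := by
  have hfield : (W.alfeldField θ σ.1.1 k).totalDegree ≤ r :=
    totalDegree_finsetSum_le fun t _ => by
      rw [mul_comm]
      exact (totalDegree_C_mul_le _ _).trans (W.totalDegree_alfeldWeight_le hθ _ _)
  have := totalDegree_affinePoly_le (W.hatAff σ.1.1 σ.1.2)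
  exact (totalDegree_mul _ _).trans (by rw [hatPoly]; omega)

lemma totalDegree_correctorRemainder_le (σ : WFIdx) :
    (W.correctorRemainder θ σ).totalDegree ≤ r :=
  (totalDegree_sub _ _).trans (max_le (hθ σ) (totalDegree_finsetSum_le fun k _ =>
    (totalDegree_pderiv_le _ _).trans (by have := W.totalDegree_correctorField_le hθ σ k; omega)))

end Degree

end WorseyFarin

/-- **Lemma 3.9 of Guzmán–Lischke–Neilan.**  Let `r ≥ 0` and let `μ` be the piecewise
linear hat function of the interior split point.  For any `θ ∈ V_r^3(T^wf)` there exist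
`ψ ∈ L_{r+1}^2(T^wf) ∩ V̊_{r+1}^2(T^wf)` and `γ ∈ 𝒱_r^3(T^wf)` such that
`μ^s θ = div(μ^s ψ) + μ^s γ` on `T` for every integer `s ≥ 0`. -/
theorem worseyFarin_mu_div_correction (W : WorseyFarin) (μ : PwS) (hμ : IsHat W μ)
    (r : ℕ) (θ : PwS) (hθ : memV3 W (r : ℤ) θ) :
    ∃ (ψ : PwV) (γ : PwS),
      memL1 W ((r : ℤ) + 1) ψ ∧ memV2o W ((r : ℤ) + 1) ψ ∧ memCalV3 W (r : ℤ) γ ∧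
      ∀ s : ℕ, ∀ σ : WFIdx, ∀ x ∈ W.tet σ,
        pev (μ σ) x ^ s * pev (θ σ) x =
          pev (pwDiv (fun τ k => μ τ ^ s * ψ τ k) σ) x +
            pev (μ σ) x ^ s * pev (γ σ) x := by
  have hθ' : ∀ σ, (θ σ).totalDegree ≤ r := fun σ => degLE_natCast_iff.mp (hθ σ)
  have hψ : degV ((r : ℤ) + 1) (W.correctorField θ) := fun σ k => by
    exact_mod_cast degLE_natCast_iff.mpr (W.totalDegree_correctorField_le hθ' σ k)
  refine ⟨W.correctorField θ, W.correctorRemainder θ, ⟨hψ, W.vCont_correctorField⟩,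
    ⟨⟨hψ, hdivMem_of_vCont W.vCont_correctorField⟩, W.zeroNor_correctorField⟩,
    ⟨fun σ => degLE_natCast_iff.mpr (W.totalDegree_correctorRemainder_le hθ' σ),
      W.faceCont_correctorRemainder⟩, fun s σ x _ => ?_⟩
  rw [pwDiv, sum_pderiv_pow_mul (hμ.sum_pderiv_mul_correctorField σ)]
  simp only [WorseyFarin.correctorRemainder, pwDiv, pev, map_mul, map_pow, map_sub]
  ring
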